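/- The 2D Godunov local solver u(a,b) is a contraction with respect to simultaneous shifts: u(a + c, b + c) = u(a,b) + c for any c ∈ ℝ, and |u(a₁,b₁) - u(a₂,b₂)| ≤ max(|a₁-a₂|, |b₁-b₂|). -/

import Mathlib

/-!
The left-hand side `G(a, b; u) = ((u - a)⁺)² + ((u - b)⁺)²` of the Godunov equation is
nondecreasing in `u`, strictly increasing once `u > min a b`, antitone in the neighbour values
`a, b`, and invariant under shifting `a, b, u` by the same amount. Hence if `a₁ ≤ a₂ + M` and
`b₁ ≤ b₂ + M`, then `G(a₂, b₂; u₁ - M) = G(a₂ + M, b₂ + M; u₁) ≤ G(a₁, b₁; u₁)`, so a solution `u₂`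
for the data `(a₂, b₂)` cannot lie below `u₁ - M`. Applied in both directions this gives both the
shift identity and the contraction.
-/

def godunovResidual (a b u : ℝ) : ℝ :=
  max (u - a) 0 ^ 2 + max (u - b) 0 ^ 2

lemma sq_max_zero_le_sq_max_zero {x y : ℝ} (h : x ≤ y) : max x 0 ^ 2 ≤ max y 0 ^ 2 :=
  pow_le_pow_left₀ (le_max_right _ _) (max_le_max_right 0 h) 2

lemma sq_max_zero_lt_sq_max_zero {x y : ℝ} (h : x < y) (hy : 0 < y) :
    max x 0 ^ 2 < max y 0 ^ 2 := by
  have hlt : max x 0 < max y 0 := by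
    rw [max_eq_left hy.le]
    exact max_lt h hy
  exact pow_lt_pow_left₀ hlt (le_max_right _ _) two_ne_zero

lemma godunovResidual_lt_of_lt {a b u v : ℝ} (hv : min a b < v) (huv : u < v) :
    godunovResidual a b u < godunovResidual a b v := by
  unfold godunovResidual
  rcases le_total a b with hab | hab
  · rw [min_eq_left hab] at hv
    exact add_lt_add_of_lt_of_le (sq_max_zero_lt_sq_max_zero (by linarith) (by linarith))
      (sq_max_zero_le_sq_max_zero (by linarith))
  · rw [min_eq_right hab] at hv
    exact add_lt_add_of_le_of_lt (sq_max_zero_le_sq_max_zero (by linarith))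
      (sq_max_zero_lt_sq_max_zero (by linarith) (by linarith))

lemma godunovResidual_le_of_le {a b a' b' u : ℝ} (ha : a' ≤ a) (hb : b' ≤ b) :
    godunovResidual a b u ≤ godunovResidual a' b' u :=
  add_le_add (sq_max_zero_le_sq_max_zero (by linarith))
    (sq_max_zero_le_sq_max_zero (by linarith))

lemma godunovResidual_add (a b u c : ℝ) :
    godunovResidual (a + c) (b + c) (u + c) = godunovResidual a b u := by
  simp only [godunovResidual, add_sub_add_right_eq_sub]

lemma le_add_of_godunovResidual_eq {a₁ b₁ a₂ b₂ u₁ u₂ M : ℝ} (hu₂ : min a₂ b₂ < u₂)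
    (heq : godunovResidual a₁ b₁ u₁ = godunovResidual a₂ b₂ u₂)
    (ha : a₁ ≤ a₂ + M) (hb : b₁ ≤ b₂ + M) : u₁ ≤ u₂ + M := by
  by_contra! h
  have hlt : u₂ < u₁ - M := by linarith
  have : godunovResidual a₂ b₂ u₂ < godunovResidual a₁ b₁ u₁ :=
    calc godunovResidual a₂ b₂ u₂
        < godunovResidual a₂ b₂ (u₁ - M) := godunovResidual_lt_of_lt (hu₂.trans hlt) hlt
      _ = godunovResidual (a₂ + M) (b₂ + M) u₁ := by
          rw [← godunovResidual_add a₂ b₂ (u₁ - M) M, sub_add_cancel]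
      _ ≤ godunovResidual a₁ b₁ u₁ := godunovResidual_le_of_le ha hb
  exact this.ne' heq

lemma eq_add_of_godunovResidual_add_eq {a b c u u' : ℝ} (hu : min a b < u)
    (hu' : min (a + c) (b + c) < u')
    (heq : godunovResidual (a + c) (b + c) u' = godunovResidual a b u) : u' = u + c := by
  refine le_antisymm (le_add_of_godunovResidual_eq hu heq le_rfl le_rfl) ?_
  have := le_add_of_godunovResidual_eq hu' heq.symm (a₂ := a + c) (b₂ := b + c) (M := -c)
    (by linarith) (by linarith)
  linarith

lemma abs_sub_le_of_godunovResidual_eq {a₁ b₁ a₂ b₂ u₁ u₂ : ℝ} (hu₁ : min a₁ b₁ < u₁)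
    (hu₂ : min a₂ b₂ < u₂) (heq : godunovResidual a₁ b₁ u₁ = godunovResidual a₂ b₂ u₂) :
    |u₁ - u₂| ≤ max |a₁ - a₂| |b₁ - b₂| := by
  set M := max |a₁ - a₂| |b₁ - b₂|
  have ha := abs_sub_le_iff.mp (le_max_left |a₁ - a₂| |b₁ - b₂|)
  have hb := abs_sub_le_iff.mp (le_max_right |a₁ - a₂| |b₁ - b₂|)
  have h₁ := le_add_of_godunovResidual_eq hu₂ heq (M := M) (by linarith) (by linarith)
  have h₂ := le_add_of_godunovResidual_eq hu₁ heq.symm (M := M) (by linarith) (by linarith)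
  exact abs_sub_le_iff.mpr ⟨by linarith, by linarith⟩

theorem stmt_6_general (δ f : ℝ) :
    (∀ a b c u u' : ℝ,
      (u > min a b ∧ (max (u - a) 0) ^ 2 + (max (u - b) 0) ^ 2 = δ ^ 2 / f ^ 2) →
      (u' > min (a + c) (b + c) ∧
        (max (u' - (a + c)) 0) ^ 2 + (max (u' - (b + c)) 0) ^ 2 = δ ^ 2 / f ^ 2) →
      u' = u + c) ∧
    (∀ a₁ b₁ a₂ b₂ u₁ u₂ : ℝ,
      (u₁ > min a₁ b₁ ∧
        (max (u₁ - a₁) 0) ^ 2 + (max (u₁ - b₁) 0) ^ 2 = δ ^ 2 / f ^ 2) →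
      (u₂ > min a₂ b₂ ∧
        (max (u₂ - a₂) 0) ^ 2 + (max (u₂ - b₂) 0) ^ 2 = δ ^ 2 / f ^ 2) →
      |u₁ - u₂| ≤ max |a₁ - a₂| |b₁ - b₂|) := by
  constructor
  · rintro a b c u u' ⟨hu, eu⟩ ⟨hu', eu'⟩
    exact eq_add_of_godunovResidual_add_eq hu hu' (eu'.trans eu.symm)
  · rintro a₁ b₁ a₂ b₂ u₁ u₂ ⟨hu₁, eu₁⟩ ⟨hu₂, eu₂⟩
    exact abs_sub_le_of_godunovResidual_eq hu₁ hu₂ (eu₁.trans eu₂.symm)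

/-- The 2D Godunov local solver commutes with simultaneous shifts and is a
contraction in the sup-norm of the neighbor values. -/
theorem stmt_6 (δ f : ℝ) (hδ : 0 < δ) (hf : 0 < f) :
    (∀ a b c u u' : ℝ,
      (u > min a b ∧ (max (u - a) 0) ^ 2 + (max (u - b) 0) ^ 2 = δ ^ 2 / f ^ 2) →
      (u' > min (a + c) (b + c) ∧
        (max (u' - (a + c)) 0) ^ 2 + (max (u' - (b + c)) 0) ^ 2 = δ ^ 2 / f ^ 2) →
      u' = u + c) ∧
    (∀ a₁ b₁ a₂ b₂ u₁ u₂ : ℝ,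
      (u₁ > min a₁ b₁ ∧
        (max (u₁ - a₁) 0) ^ 2 + (max (u₁ - b₁) 0) ^ 2 = δ ^ 2 / f ^ 2) →
      (u₂ > min a₂ b₂ ∧
        (max (u₂ - a₂) 0) ^ 2 + (max (u₂ - b₂) 0) ^ 2 = δ ^ 2 / f ^ 2) →
      |u₁ - u₂| ≤ max |a₁ - a₂| |b₁ - b₂|) :=
  stmt_6_general δ f
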